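/- There is a constant c' > 0 such that for all small ε > 0, the infimum of f̂_ε(m₁,m₂) over [−1,1]² equals the infimum over the set {(m₁,m₂) : |m₁| ≤ c'ε^{1/4}, |m₂| ≤ c'ε^{1/4}}. -/
import Mathlib

noncomputable def piHat (ε h₁ h₂ : ℝ) : ℝ :=
  Real.log (2 * (Real.exp ε * Real.cosh (h₁ + h₂) + Real.exp (-ε) * Real.cosh (h₂ - h₁)))

/-- Legendre transform of `piHat ε`. -/
noncomputable def phiHat (ε m₁ m₂ : ℝ) : ℝ :=
  sSup {x : ℝ | ∃ h₁ h₂ : ℝ, x = h₁ * m₁ + h₂ * m₂ - piHat ε h₁ h₂}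

noncomputable def fHat (ε m₁ m₂ : ℝ) : ℝ :=
  -(m₁ ^ 2 + m₂ ^ 2) / 2 + phiHat ε m₁ m₂

lemma cosh_le_exp_quad {x : ℝ} (hx : |x| ≤ 1) :
    Real.cosh x ≤ Real.exp (x^2/2 - x^4/20) := by
  have hx2 : x^2 ≤ 1 := by
    have := abs_le.1 hx
    nlinarith [this.1, this.2]
  have hb := Real.exp_bound hx (n := 6) (by norm_num)
  have hbn := Real.exp_bound (x := -x) (by rwa [abs_neg]) (n := 6) (by norm_num)
  simp only [Finset.sum_range_succ, Finset.sum_range_zero, Nat.factorial] at hb hbn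
  norm_num at hb hbn
  have h6 : |x|^6 = x^6 := by
    rw [← abs_pow, abs_of_nonneg (by positivity)]
  rw [h6] at hb hbn
  have hbx := (abs_sub_le_iff.1 hb).1
  have hbnx := (abs_sub_le_iff.1 hbn).1
  have hcosh : Real.cosh x ≤ 1 + x^2/2 + x^4/24 + x^6 * (7/4320) := by
    rw [Real.cosh_eq]
    nlinarith [hbx, hbnx]
  have ht : (0:ℝ) ≤ x^2/2 - x^4/20 := by nlinarith [sq_nonneg x]
  have hE := Real.sum_le_exp_of_nonneg ht 3
  simp only [Finset.sum_range_succ, Finset.sum_range_zero, Nat.factorial] at hE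
  norm_num at hE
  have hx4 : x^6 ≤ x^4 := by nlinarith [sq_nonneg x, sq_nonneg (x^2), pow_two_nonneg x]
  nlinarith [hE, hcosh, sq_nonneg (x^2), sq_nonneg x, hx4, pow_two_nonneg (x^3)]

lemma exp_abs_le_two_cosh (x : ℝ) : Real.exp |x| ≤ 2 * Real.cosh x := by
  rw [Real.cosh_eq]
  rcases abs_cases x with ⟨h, _⟩ | ⟨h, _⟩ <;> rw [h] <;>
    nlinarith [Real.exp_pos x, Real.exp_pos (-x)]

lemma cosh_prod (h₁ h₂ : ℝ) :
    Real.cosh (h₁ + h₂) + Real.cosh (h₂ - h₁) = 2 * Real.cosh h₁ * Real.cosh h₂ := by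
  rw [Real.cosh_add, Real.cosh_sub]; ring

lemma inner_pos (ε h₁ h₂ : ℝ) :
    0 < 2 * (Real.exp ε * Real.cosh (h₁ + h₂) + Real.exp (-ε) * Real.cosh (h₂ - h₁)) := by
  have := Real.cosh_pos (h₁ + h₂)
  have := Real.cosh_pos (h₂ - h₁)
  have := Real.exp_pos ε
  have := Real.exp_pos (-ε)
  positivity

lemma piHat_lower {ε : ℝ} (hε : 0 ≤ ε) (h₁ h₂ : ℝ) :
    -ε + |h₁| + |h₂| ≤ piHat ε h₁ h₂ := by
  have key : Real.exp (-ε + |h₁| + |h₂|)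
      ≤ 2 * (Real.exp ε * Real.cosh (h₁ + h₂) + Real.exp (-ε) * Real.cosh (h₂ - h₁)) := by
    have hee : Real.exp (-ε) ≤ Real.exp ε := Real.exp_le_exp.2 (by linarith)
    have h1 : 2 * Real.exp (-ε) * (Real.cosh (h₁ + h₂) + Real.cosh (h₂ - h₁))
        ≤ 2 * (Real.exp ε * Real.cosh (h₁ + h₂) + Real.exp (-ε) * Real.cosh (h₂ - h₁)) := by
      have := Real.cosh_pos (h₁ + h₂)
      have := Real.exp_pos (-ε)
      nlinarith
    have h2 : Real.exp (-ε + |h₁| + |h₂|)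
        ≤ 2 * Real.exp (-ε) * (Real.cosh (h₁ + h₂) + Real.cosh (h₂ - h₁)) := by
      rw [cosh_prod, Real.exp_add, Real.exp_add]
      have e1 := exp_abs_le_two_cosh h₁
      have e2 := exp_abs_le_two_cosh h₂
      have hm : Real.exp |h₁| * Real.exp |h₂| ≤ 2 * Real.cosh h₁ * (2 * Real.cosh h₂) :=
        mul_le_mul e1 e2 (Real.exp_pos _).le (by positivity)
      nlinarith [Real.exp_pos (-ε), hm]
    linarith
  have := Real.log_le_log (Real.exp_pos _) key
  rwa [Real.log_exp] at this

lemma piHat_upper {ε : ℝ} (hε : 0 ≤ ε) {h₁ h₂ : ℝ} (h1 : |h₁| ≤ 1) (h2 : |h₂| ≤ 1) :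
    piHat ε h₁ h₂ ≤ ε + Real.log 4 + (h₁^2/2 - h₁^4/20) + (h₂^2/2 - h₂^4/20) := by
  have key : 2 * (Real.exp ε * Real.cosh (h₁ + h₂) + Real.exp (-ε) * Real.cosh (h₂ - h₁))
      ≤ Real.exp (ε + Real.log 4 + (h₁^2/2 - h₁^4/20) + (h₂^2/2 - h₂^4/20)) := by
    have hee : Real.exp (-ε) ≤ Real.exp ε := Real.exp_le_exp.2 (by linarith)
    have step1 : 2 * (Real.exp ε * Real.cosh (h₁ + h₂) + Real.exp (-ε) * Real.cosh (h₂ - h₁))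
        ≤ Real.exp ε * 4 * (Real.cosh h₁ * Real.cosh h₂) := by
      have hp := cosh_prod h₁ h₂
      have hB := (Real.cosh_pos (h₂ - h₁)).le
      have hpe : Real.exp ε * (Real.cosh (h₁ + h₂) + Real.cosh (h₂ - h₁))
          = Real.exp ε * (2 * Real.cosh h₁ * Real.cosh h₂) := by rw [hp]
      linarith [mul_le_mul_of_nonneg_right hee hB, hpe]
    have c1 := cosh_le_exp_quad h1
    have c2 := cosh_le_exp_quad h2
    have he4 : Real.exp (ε + Real.log 4 + (h₁^2/2 - h₁^4/20) + (h₂^2/2 - h₂^4/20))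
        = Real.exp ε * 4 * (Real.exp (h₁^2/2 - h₁^4/20) * Real.exp (h₂^2/2 - h₂^4/20)) := by
      rw [Real.exp_add, Real.exp_add, Real.exp_add, Real.exp_log (by norm_num : (0:ℝ) < 4)]
      ring
    rw [he4]
    have hm : Real.cosh h₁ * Real.cosh h₂
        ≤ Real.exp (h₁^2/2 - h₁^4/20) * Real.exp (h₂^2/2 - h₂^4/20) :=
      mul_le_mul c1 c2 (Real.cosh_pos h₂).le (Real.exp_pos _).le
    nlinarith [Real.exp_pos ε, mul_le_mul_of_nonneg_left hm (Real.exp_pos ε).le]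
  have := Real.log_le_log (inner_pos ε h₁ h₂) key
  rwa [Real.log_exp] at this

lemma phiHat_bddAbove {ε : ℝ} (hε : 0 ≤ ε) {m₁ m₂ : ℝ} (h1 : |m₁| ≤ 1) (h2 : |m₂| ≤ 1) :
    ∀ x ∈ {x : ℝ | ∃ h₁ h₂ : ℝ, x = h₁ * m₁ + h₂ * m₂ - piHat ε h₁ h₂}, x ≤ ε := by
  rintro x ⟨h₁, h₂, rfl⟩
  have l := piHat_lower hε h₁ h₂
  have b1 : h₁ * m₁ ≤ |h₁| := by
    calc h₁ * m₁ ≤ |h₁ * m₁| := le_abs_self _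
    _ = |h₁| * |m₁| := abs_mul _ _
    _ ≤ |h₁| * 1 := by exact mul_le_mul_of_nonneg_left h1 (abs_nonneg _)
    _ = |h₁| := mul_one _
  have b2 : h₂ * m₂ ≤ |h₂| := by
    calc h₂ * m₂ ≤ |h₂ * m₂| := le_abs_self _
    _ = |h₂| * |m₂| := abs_mul _ _
    _ ≤ |h₂| * 1 := by exact mul_le_mul_of_nonneg_left h2 (abs_nonneg _)
    _ = |h₂| := mul_one _
  linarith

lemma fHat_lower {ε : ℝ} (hε : 0 ≤ ε) {m₁ m₂ : ℝ} (h1 : |m₁| ≤ 1) (h2 : |m₂| ≤ 1) :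
    -Real.log 4 - ε + (m₁^4 + m₂^4)/20 ≤ fHat ε m₁ m₂ := by
  have hmem : m₁ * m₁ + m₂ * m₂ - piHat ε m₁ m₂
      ∈ {x : ℝ | ∃ h₁ h₂ : ℝ, x = h₁ * m₁ + h₂ * m₂ - piHat ε h₁ h₂} := ⟨m₁, m₂, rfl⟩
  have hb : BddAbove {x : ℝ | ∃ h₁ h₂ : ℝ, x = h₁ * m₁ + h₂ * m₂ - piHat ε h₁ h₂} :=
    ⟨ε, phiHat_bddAbove hε h1 h2⟩
  have hphi : m₁ * m₁ + m₂ * m₂ - piHat ε m₁ m₂ ≤ phiHat ε m₁ m₂ := le_csSup hb hmem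
  have hup := piHat_upper hε h1 h2
  unfold fHat
  nlinarith

lemma phiHat_zero {ε : ℝ} (hε : 0 ≤ ε) : phiHat ε 0 0 = -piHat ε 0 0 := by
  unfold phiHat
  have hne : {x : ℝ | ∃ h₁ h₂ : ℝ, x = h₁ * 0 + h₂ * 0 - piHat ε h₁ h₂}.Nonempty :=
    ⟨0 * 0 + 0 * 0 - piHat ε 0 0, ⟨0, 0, rfl⟩⟩
  apply le_antisymm
  · apply csSup_le hne
    rintro x ⟨h₁, h₂, rfl⟩
    have hle : piHat ε 0 0 ≤ piHat ε h₁ h₂ := by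
      unfold piHat
      apply Real.log_le_log (inner_pos ε 0 0)
      have c1 := Real.one_le_cosh (h₁ + h₂)
      have c2 := Real.one_le_cosh (h₂ - h₁)
      have e1 := (Real.exp_pos ε).le
      have e2 := (Real.exp_pos (-ε)).le
      simp only [add_zero, sub_zero, Real.cosh_zero]
      nlinarith [mul_le_mul_of_nonneg_left c1 e1, mul_le_mul_of_nonneg_left c2 e2]
    linarith
  · exact le_csSup ⟨ε, phiHat_bddAbove hε (by simp) (by simp)⟩ ⟨0, 0, by ring⟩

lemma fHat_zero_le {ε : ℝ} (hε : 0 ≤ ε) : fHat ε 0 0 ≤ -Real.log 4 := by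
  unfold fHat
  rw [phiHat_zero hε]
  have : Real.log 4 ≤ piHat ε 0 0 := by
    unfold piHat
    apply Real.log_le_log (by norm_num)
    simp only [add_zero, sub_zero, Real.cosh_zero]
    linarith [Real.add_one_le_exp ε, Real.add_one_le_exp (-ε)]
  norm_num
  linarith

theorem inf_restricted_to_small_box :
    ∃ c' > (0:ℝ), ∃ ε₀ > (0:ℝ), ∀ ε : ℝ, 0 < ε → ε ≤ ε₀ →
      sInf {x : ℝ | ∃ m₁ ∈ Set.Icc (-1:ℝ) 1, ∃ m₂ ∈ Set.Icc (-1:ℝ) 1,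
          x = fHat ε m₁ m₂} =
        sInf {x : ℝ | ∃ m₁ ∈ Set.Icc (-1:ℝ) 1, ∃ m₂ ∈ Set.Icc (-1:ℝ) 1,
          |m₁| ≤ c' * ε ^ ((1:ℝ)/4) ∧ |m₂| ≤ c' * ε ^ ((1:ℝ)/4) ∧ x = fHat ε m₁ m₂} := by
  refine ⟨3, by norm_num, 1, by norm_num, fun ε hε hε1 => ?_⟩
  have hε' : (0:ℝ) ≤ ε := hε.le
  set b : ℝ := 3 * ε ^ ((1:ℝ)/4) with hbdef
  have hbpos : 0 < b := by
    have := Real.rpow_pos_of_pos hε ((1:ℝ)/4)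
    positivity
  set S := {x : ℝ | ∃ m₁ ∈ Set.Icc (-1:ℝ) 1, ∃ m₂ ∈ Set.Icc (-1:ℝ) 1,
      x = fHat ε m₁ m₂} with hS
  set T := {x : ℝ | ∃ m₁ ∈ Set.Icc (-1:ℝ) 1, ∃ m₂ ∈ Set.Icc (-1:ℝ) 1,
      |m₁| ≤ b ∧ |m₂| ≤ b ∧ x = fHat ε m₁ m₂} with hT
  have h01 : (0:ℝ) ∈ Set.Icc (-1:ℝ) 1 := by norm_num
  have hb0 : |(0:ℝ)| ≤ b := by simp [hbpos.le]
  have hT0 : fHat ε 0 0 ∈ T := ⟨0, h01, 0, h01, hb0, hb0, rfl⟩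
  have hTS : T ⊆ S := by
    rintro x ⟨m₁, hm₁, m₂, hm₂, _, _, rfl⟩
    exact ⟨m₁, hm₁, m₂, hm₂, rfl⟩
  have habs : ∀ m : ℝ, m ∈ Set.Icc (-1:ℝ) 1 → |m| ≤ 1 := fun m hm => abs_le.2 ⟨hm.1, hm.2⟩
  have hSlb : ∀ x ∈ S, -Real.log 4 - ε ≤ x := by
    rintro x ⟨m₁, hm₁, m₂, hm₂, rfl⟩
    have h := fHat_lower hε' (habs _ hm₁) (habs _ hm₂)
    have h4 : (0:ℝ) ≤ m₁^4 + m₂^4 := by positivity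
    linarith
  have bddS : BddBelow S := ⟨_, hSlb⟩
  have bddT : BddBelow T := bddS.mono hTS
  have hSne : S.Nonempty := ⟨_, hTS hT0⟩
  apply le_antisymm
  · exact csInf_le_csInf bddS ⟨_, hT0⟩ hTS
  · apply le_csInf hSne
    rintro x ⟨m₁, hm₁, m₂, hm₂, rfl⟩
    by_cases hcase : |m₁| ≤ b ∧ |m₂| ≤ b
    · exact csInf_le bddT ⟨m₁, hm₁, m₂, hm₂, hcase.1, hcase.2, rfl⟩
    · have hTle : sInf T ≤ fHat ε 0 0 := csInf_le bddT hT0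
      have hf0 : fHat ε 0 0 ≤ -Real.log 4 := fHat_zero_le hε'
      have hb4 : b^4 = 81 * ε := by
        rw [hbdef, mul_pow, ← Real.rpow_natCast (ε ^ ((1:ℝ)/4)) 4, ← Real.rpow_mul hε']
        norm_num
      have hq : 81 * ε ≤ m₁^4 + m₂^4 := by
        have e1 : |m₁|^4 = m₁^4 := by rw [← abs_pow, abs_of_nonneg (by positivity)]
        have e2 : |m₂|^4 = m₂^4 := by rw [← abs_pow, abs_of_nonneg (by positivity)]
        rcases not_and_or.1 hcase with h | h
        · have hle : b ≤ |m₁| := le_of_not_ge h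
          have h4 : b^4 ≤ |m₁|^4 := pow_le_pow_left₀ hbpos.le hle 4
          have h5 : (0:ℝ) ≤ m₂^4 := by positivity
          rw [e1, hb4] at h4
          linarith
        · have hle : b ≤ |m₂| := le_of_not_ge h
          have h4 : b^4 ≤ |m₂|^4 := pow_le_pow_left₀ hbpos.le hle 4
          have h5 : (0:ℝ) ≤ m₁^4 := by positivity
          rw [e2, hb4] at h4
          linarith
      have hlow := fHat_lower hε' (habs _ hm₁) (habs _ hm₂)
      calc sInf T ≤ fHat ε 0 0 := hTle
        _ ≤ -Real.log 4 := hf0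
        _ ≤ fHat ε m₁ m₂ := by linarith
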